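/- arXiv:2401.04622 — 2 statements merged into one kernel-verified Lean document; each statement's English description precedes it below -/
import Mathlib

section
/- Let a, ρ > 0 satisfy J_1(aρ) = 0 and J_0(aρ) ≠ 0. Define f : (0,∞) → ℝ by f(r) = J_0(ar)/J_0(aρ) for 0 < r ≤ ρ and f(r) = 1 for r > ρ. Then f is continuously differentiable on (0,∞); f is twice differentiable on (0,ρ) and on (ρ,∞), where it satisfies f″(r) + f′(r)/r + a²·𝟙_{r<ρ}·f(r) = 0; and f is bounded with f(r) → 1 as r → ∞. (Thus f is an s-resonant state at zero energy for −Δ − a²·𝟙_{|x|≤ρ} on ℝ².) -/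
open scoped Real Topology
open Filter Asymptotics

noncomputable def eulerGamma : ℝ := -deriv Real.Gamma 1

noncomputable def harm (m : ℕ) : ℝ := ∑ j ∈ Finset.range m, (1 : ℝ)/(j+1)

noncomputable def besselJr (ℓ : ℕ) (x : ℝ) : ℝ :=
  ∑' k : ℕ, ((-1 : ℝ)^k / ((Nat.factorial k : ℝ) * (Nat.factorial (k + ℓ) : ℝ))) * (x/2)^(2*k + ℓ)

noncomputable def besselYr (ℓ : ℕ) (x : ℝ) : ℝ :=
  (2/Real.pi) * (Real.log (x/2) + eulerGamma) * besselJr ℓ x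
  - (1/Real.pi) * ∑ k ∈ Finset.range ℓ,
      ((Nat.factorial (ℓ - k - 1) : ℝ) / (Nat.factorial k : ℝ)) * (x/2)^(2*(k:ℤ) - (ℓ:ℤ))
  - (1/Real.pi) * ∑' k : ℕ,
      ((-1:ℝ)^k * (harm k + harm (k+ℓ)) / ((Nat.factorial k : ℝ) * (Nat.factorial (k+ℓ) : ℝ))) * (x/2)^(2*k+ℓ)

noncomputable def besselJn (ℓ : ℕ) (z : ℂ) : ℂ :=
  ∑' k : ℕ, ((-1 : ℂ)^k / ((Nat.factorial k : ℂ) * (Nat.factorial (k + ℓ) : ℂ))) * (z/2)^(2*k + ℓ)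

noncomputable def besselJZ (ℓ : ℤ) (z : ℂ) : ℂ :=
  if 0 ≤ ℓ then besselJn ℓ.toNat z else (-1 : ℂ)^((-ℓ).toNat) * besselJn (-ℓ).toNat z

noncomputable def besselYn (ℓ : ℕ) (z : ℂ) : ℂ :=
  (2/(Real.pi : ℂ)) * (Complex.log (z/2) + (eulerGamma : ℂ)) * besselJn ℓ z
  - (1/(Real.pi : ℂ)) * ∑ k ∈ Finset.range ℓ,
      ((Nat.factorial (ℓ - k - 1) : ℂ) / (Nat.factorial k : ℂ)) * (z/2)^(2*(k:ℤ) - (ℓ:ℤ))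
  - (1/(Real.pi : ℂ)) * ∑' k : ℕ,
      ((-1:ℂ)^k * ((harm k : ℝ) + (harm (k+ℓ) : ℝ)) / ((Nat.factorial k : ℂ) * (Nat.factorial (k+ℓ) : ℂ))) * (z/2)^(2*k+ℓ)

noncomputable def besselYZ (ℓ : ℤ) (z : ℂ) : ℂ :=
  if 0 ≤ ℓ then besselYn ℓ.toNat z else (-1 : ℂ)^((-ℓ).toNat) * besselYn (-ℓ).toNat z

noncomputable def hankelH1 (ℓ : ℤ) (z : ℂ) : ℂ := besselJZ ℓ z + Complex.I * besselYZ ℓ z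

noncomputable def hankelH1n (ℓ : ℕ) (z : ℂ) : ℂ := besselJn ℓ z + Complex.I * besselYn ℓ z
noncomputable def hankelH2n (ℓ : ℕ) (z : ℂ) : ℂ := besselJn ℓ z - Complex.I * besselYn ℓ z

noncomputable def muC (a : ℝ) (lam : ℂ) : ℂ := (lam^2 + (a:ℂ)^2) ^ ((1:ℂ)/2)

noncomputable def Qfun (ρ : ℝ) (ℓ : ℤ) (lam : ℂ) (a : ℝ) : ℂ :=
  muC a lam * besselJZ (ℓ-1) ((ρ:ℂ) * muC a lam) * hankelH1 ℓ (lam * (ρ:ℂ))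
  - lam * besselJZ ℓ ((ρ:ℂ) * muC a lam) * hankelH1 (ℓ-1) (lam * (ρ:ℂ))

noncomputable def Dfun (a ρ : ℝ) (ℓ : ℕ) (lam : ℝ) : ℝ :=
  (Real.sqrt (lam^2+a^2) * besselJr (ℓ-1) (Real.sqrt (lam^2+a^2)*ρ) * besselJr ℓ (lam*ρ)
    - lam * besselJr ℓ (Real.sqrt (lam^2+a^2)*ρ) * besselJr (ℓ-1) (lam*ρ))^2
  + (Real.sqrt (lam^2+a^2) * besselJr (ℓ-1) (Real.sqrt (lam^2+a^2)*ρ) * besselYr ℓ (lam*ρ)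
    - lam * besselJr ℓ (Real.sqrt (lam^2+a^2)*ρ) * besselYr (ℓ-1) (lam*ρ))^2

noncomputable def Ffun (a ρ : ℝ) (ℓ : ℕ) (lam : ℝ) : ℝ :=
  (2*a^2/(Real.pi^2*lam)) * besselJr (ℓ-1) (Real.sqrt (lam^2+a^2)*ρ)
    * besselJr (ℓ+1) (Real.sqrt (lam^2+a^2)*ρ) / Dfun a ρ ℓ lam

noncomputable def D0fun (a ρ : ℝ) (lam : ℝ) : ℝ :=
  (Real.sqrt (lam^2+a^2) * besselJr 1 (Real.sqrt (lam^2+a^2)*ρ) * besselJr 0 (lam*ρ)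
    - lam * besselJr 0 (Real.sqrt (lam^2+a^2)*ρ) * besselJr 1 (lam*ρ))^2
  + (Real.sqrt (lam^2+a^2) * besselJr 1 (Real.sqrt (lam^2+a^2)*ρ) * besselYr 0 (lam*ρ)
    - lam * besselJr 0 (Real.sqrt (lam^2+a^2)*ρ) * besselYr 1 (lam*ρ))^2

noncomputable def F0fun (a ρ : ℝ) (lam : ℝ) : ℝ :=
  -(2*a^2/(Real.pi^2*lam)) * (besselJr 1 (Real.sqrt (lam^2+a^2)*ρ))^2 / D0fun a ρ lam

/-! Differentiating the Bessel series termwise (legitimate on every ball, since the coefficients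
are bounded by `1/k!`) gives the recurrences `J₀' = -J₁` and `J₁' = J₀ - J₁/x`, so `J₀(a r)` solves
`f'' + f'/r + a² f = 0`. At `r = ρ` the inner piece has value `1` and slope
`-a J₁(aρ)/J₀(aρ) = 0`, matching the constant outer piece; hence `f' = -a J₁(a min(r, ρ))/J₀(aρ)`
on `(0, ∞)`, which is continuous. -/
theorem natCast_mul_pow_pred_le {y R : ℝ} (hy : |y| ≤ R) (n : ℕ) :
    n * |y| ^ (n - 1) ≤ (2 * (R + 1)) ^ n := by
  have hR : 1 ≤ R + 1 := by linarith [abs_nonneg y]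
  rw [mul_pow]
  gcongr
  · exact_mod_cast (Nat.lt_two_pow_self).le
  · calc |y| ^ (n - 1) ≤ (R + 1) ^ (n - 1) := by gcongr; linarith
      _ ≤ (R + 1) ^ n := pow_le_pow_right₀ hR (Nat.sub_le n 1)

section PowerSeries

variable {c : ℕ → ℝ}

theorem summable_mul_pow_of_abs_le_inv_factorial (hc : ∀ k, |c k| ≤ (Nat.factorial k : ℝ)⁻¹)
    (m : ℕ) (x : ℝ) : Summable fun k => c k * x ^ (2 * k + m) := by
  refine .of_norm_bounded ((Real.summable_pow_div_factorial (x ^ 2)).mul_left (|x| ^ m)) fun k => ?_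
  simp only [norm_mul, norm_pow, Real.norm_eq_abs, pow_add, pow_mul, sq_abs]
  calc |c k| * ((x ^ 2) ^ k * |x| ^ m) ≤ (Nat.factorial k : ℝ)⁻¹ * ((x ^ 2) ^ k * |x| ^ m) := by
        gcongr; exact hc k
    _ = |x| ^ m * ((x ^ 2) ^ k / Nat.factorial k) := by ring

theorem norm_mul_natCast_mul_pow_pred_le (hc : ∀ k, |c k| ≤ (Nat.factorial k : ℝ)⁻¹)
    {y R : ℝ} (hy : |y| ≤ R) (m k : ℕ) :
    ‖c k * ((2 * k + m : ℕ) * y ^ (2 * k + m - 1))‖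
      ≤ (2 * (R + 1)) ^ m * (((2 * (R + 1)) ^ 2) ^ k / Nat.factorial k) := by
  simp only [norm_mul, norm_pow, Real.norm_eq_abs, Nat.abs_cast]
  calc |c k| * ((2 * k + m : ℕ) * |y| ^ (2 * k + m - 1))
      ≤ (Nat.factorial k : ℝ)⁻¹ * (2 * (R + 1)) ^ (2 * k + m) := by
        gcongr
        · exact hc k
        · exact natCast_mul_pow_pred_le hy _
    _ = _ := by rw [pow_add, pow_mul]; ring

theorem summable_mul_natCast_mul_pow_pred (hc : ∀ k, |c k| ≤ (Nat.factorial k : ℝ)⁻¹)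
    (m : ℕ) (x : ℝ) : Summable fun k => c k * ((2 * k + m : ℕ) * x ^ (2 * k + m - 1)) :=
  .of_norm_bounded ((Real.summable_pow_div_factorial _).mul_left _)
    (norm_mul_natCast_mul_pow_pred_le hc le_rfl m)

theorem hasDerivAt_tsum_mul_pow (hc : ∀ k, |c k| ≤ (Nat.factorial k : ℝ)⁻¹) (m : ℕ) (x : ℝ) :
    HasDerivAt (fun y => ∑' k, c k * y ^ (2 * k + m))
      (∑' k, c k * ((2 * k + m : ℕ) * x ^ (2 * k + m - 1))) x := by
  set R := |x| + 1
  refine hasDerivAt_tsum_of_isPreconnected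
    ((Real.summable_pow_div_factorial ((2 * (R + 1)) ^ 2)).mul_left ((2 * (R + 1)) ^ m))
    Metric.isOpen_ball (convex_ball 0 R).isPreconnected
    (fun k y _ => (hasDerivAt_pow _ y).const_mul (c k)) (fun k y hy => ?_)
    (Metric.mem_ball_self (by positivity)) (summable_mul_pow_of_abs_le_inv_factorial hc m 0)
    (by simp [R])
  rw [mem_ball_zero_iff, Real.norm_eq_abs] at hy
  exact norm_mul_natCast_mul_pow_pred_le hc hy.le m k

end PowerSeries

noncomputable def besselJrCoeff (ℓ k : ℕ) : ℝ :=
  (-1) ^ k / ((Nat.factorial k : ℝ) * (Nat.factorial (k + ℓ) : ℝ))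

theorem abs_besselJrCoeff_le (ℓ k : ℕ) : |besselJrCoeff ℓ k| ≤ (Nat.factorial k : ℝ)⁻¹ := by
  have hk := Nat.factorial_pos k
  have hkl : (1 : ℝ) ≤ Nat.factorial (k + ℓ) := by exact_mod_cast Nat.factorial_pos (k + ℓ)
  rw [besselJrCoeff, abs_div, abs_pow, abs_neg, abs_one, one_pow, abs_of_pos (by positivity),
    one_div, mul_inv]
  exact mul_le_of_le_one_right (by positivity) (inv_le_one_of_one_le₀ hkl)

theorem natCast_mul_besselJrCoeff_succ_left (ℓ k : ℕ) :
    ((k + ℓ + 1 : ℕ) : ℝ) * besselJrCoeff (ℓ + 1) k = besselJrCoeff ℓ k := by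
  rw [besselJrCoeff, besselJrCoeff, ← add_assoc, Nat.factorial_succ]
  have := Nat.factorial_pos k
  have := Nat.factorial_pos (k + ℓ)
  push_cast
  field_simp

theorem natCast_mul_besselJrCoeff_succ_right (ℓ k : ℕ) :
    ((k + 1 : ℕ) : ℝ) * besselJrCoeff ℓ (k + 1) = -besselJrCoeff (ℓ + 1) k := by
  rw [besselJrCoeff, besselJrCoeff, Nat.factorial_succ, add_right_comm, pow_succ, ← add_assoc]
  have := Nat.factorial_pos k
  have := Nat.factorial_pos (k + ℓ + 1)
  push_cast
  field_simp

theorem hasSum_besselJr (ℓ : ℕ) (x : ℝ) :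
    HasSum (fun k => besselJrCoeff ℓ k * (x / 2) ^ (2 * k + ℓ)) (besselJr ℓ x) :=
  (summable_mul_pow_of_abs_le_inv_factorial (abs_besselJrCoeff_le ℓ) ℓ (x / 2)).hasSum

-- Stated for `x * D`, the termwise Euler operator `x d/dx`, so that no power `(x/2)^(n-1)` with
-- truncated exponent appears.
theorem exists_hasDerivAt_besselJr (ℓ : ℕ) (x : ℝ) :
    ∃ D, HasDerivAt (besselJr ℓ) D x ∧
      HasSum (fun k => (2 * k + ℓ : ℕ) * besselJrCoeff ℓ k * (x / 2) ^ (2 * k + ℓ)) (x * D) := by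
  have hD := (hasDerivAt_tsum_mul_pow (abs_besselJrCoeff_le ℓ) ℓ (x / 2)).comp x
    ((hasDerivAt_id x).div_const 2)
  refine ⟨_, hD, ?_⟩
  rw [show ∀ D, x * (D * (1 / 2)) = x / 2 * D by intro; ring]
  refine ((summable_mul_natCast_mul_pow_pred (abs_besselJrCoeff_le ℓ) ℓ (x / 2)).hasSum.mul_left
    (x / 2)).congr_fun fun k => ?_
  rcases Nat.eq_zero_or_pos (2 * k + ℓ) with h | h
  · simp [h]
  · rw [← mul_pow_sub_one h.ne' (x / 2)]; ring

theorem continuous_besselJr (ℓ : ℕ) : Continuous (besselJr ℓ) :=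
  continuous_iff_continuousAt.2 fun x =>
    (exists_hasDerivAt_besselJr ℓ x).choose_spec.1.continuousAt

theorem hasDerivAt_besselJr (ℓ : ℕ) {x : ℝ} (hx : x ≠ 0) :
    HasDerivAt (besselJr ℓ) (ℓ / x * besselJr ℓ x - besselJr (ℓ + 1) x) x := by
  obtain ⟨D, hD, hsum⟩ := exists_hasDerivAt_besselJr ℓ x
  convert hD using 1
  refine mul_left_cancel₀ hx (hsum.unique ?_).symm
  have hshift : HasSum (fun k => (2 * k : ℕ) * besselJrCoeff ℓ k * (x / 2) ^ (2 * k + ℓ))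
      (-(x * besselJr (ℓ + 1) x)) := by
    refine (hasSum_nat_add_iff' 1).1 ?_
    rw [Finset.sum_range_one, mul_zero, Nat.cast_zero, zero_mul, zero_mul, sub_zero, ← neg_mul]
    refine ((hasSum_besselJr (ℓ + 1) x).mul_left (-x)).congr_fun fun k => ?_
    have := natCast_mul_besselJrCoeff_succ_right ℓ k
    rw [show 2 * (k + 1) + ℓ = 2 * k + (ℓ + 1) + 1 by ring, pow_succ]
    push_cast at this ⊢
    linear_combination (2 * (x / 2) ^ (2 * k + (ℓ + 1)) * (x / 2)) * this
  rw [show x * (ℓ / x * besselJr ℓ x - besselJr (ℓ + 1) x)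
      = ℓ * besselJr ℓ x + -(x * besselJr (ℓ + 1) x) by field_simp; ring]
  exact (((hasSum_besselJr ℓ x).mul_left (ℓ : ℝ)).add hshift).congr_fun fun k => by push_cast; ring

theorem hasDerivAt_besselJr_succ (ℓ : ℕ) {x : ℝ} (hx : x ≠ 0) :
    HasDerivAt (besselJr (ℓ + 1)) (besselJr ℓ x - (ℓ + 1) / x * besselJr (ℓ + 1) x) x := by
  obtain ⟨D, hD, hsum⟩ := exists_hasDerivAt_besselJr (ℓ + 1) x
  convert hD using 1
  refine mul_left_cancel₀ hx (hsum.unique ?_).symm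
  rw [show x * (besselJr ℓ x - (ℓ + 1) / x * besselJr (ℓ + 1) x)
      = x * besselJr ℓ x + -(ℓ + 1) * besselJr (ℓ + 1) x by field_simp; ring]
  refine (((hasSum_besselJr ℓ x).mul_left x).add
    ((hasSum_besselJr (ℓ + 1) x).mul_left (-(ℓ + 1 : ℝ)))).congr_fun fun k => ?_
  have := natCast_mul_besselJrCoeff_succ_left ℓ k
  rw [show 2 * k + (ℓ + 1) = 2 * k + ℓ + 1 by ring, pow_succ]
  push_cast at this ⊢
  linear_combination (2 * (x / 2) ^ (2 * k + ℓ) * (x / 2)) * this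

theorem hasDerivAt_besselJr_zero_comp_mul {a r : ℝ} (h : a * r ≠ 0) :
    HasDerivAt (fun s => besselJr 0 (a * s)) (-a * besselJr 1 (a * r)) r := by
  refine ((hasDerivAt_besselJr 0 h).comp r ((hasDerivAt_id r).const_mul a)).congr_deriv ?_
  rw [Nat.cast_zero, zero_div, zero_mul]; ring

theorem hasDerivAt_besselJr_one_comp_mul {a r : ℝ} (h : a * r ≠ 0) :
    HasDerivAt (fun s => besselJr 1 (a * s))
      (a * besselJr 0 (a * r) - besselJr 1 (a * r) / r) r := by
  refine ((hasDerivAt_besselJr_succ 0 h).comp r ((hasDerivAt_id r).const_mul a)).congr_deriv ?_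
  have ha : a ≠ 0 := left_ne_zero_of_mul h
  have hr : r ≠ 0 := right_ne_zero_of_mul h
  rw [Nat.cast_zero, zero_add]; field_simp

theorem contDiffOn_one_of_hasDerivAt {f f' : ℝ → ℝ} {s : Set ℝ} (hs : IsOpen s)
    (hf : ∀ x ∈ s, HasDerivAt f (f' x) x) (hf' : ContinuousOn f' s) : ContDiffOn ℝ 1 f s := by
  rw [show (1 : WithTop ℕ∞) = 0 + 1 from rfl, contDiffOn_succ_iff_deriv_of_isOpen hs]
  refine ⟨fun x hx => (hf x hx).differentiableAt.differentiableWithinAt, by simp, ?_⟩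
  rw [contDiffOn_zero]
  exact hf'.congr fun x hx => (hf x hx).deriv

section ResonanceProfile

variable {a ρ : ℝ} {f : ℝ → ℝ}

theorem hasDerivAt_resonanceProfile (ha : a ≠ 0) (hJ1 : besselJr 1 (a * ρ) = 0)
    (hJ0 : besselJr 0 (a * ρ) ≠ 0)
    (hfin : ∀ r : ℝ, 0 < r → r ≤ ρ → f r = besselJr 0 (a * r) / besselJr 0 (a * ρ))
    (hfout : ∀ r : ℝ, ρ < r → f r = 1) {r : ℝ} (hr : 0 < r) :
    HasDerivAt f (-a * besselJr 1 (a * min r ρ) / besselJr 0 (a * ρ)) r := by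
  have hF : ∀ {s : ℝ}, 0 < s → HasDerivAt (fun s => besselJr 0 (a * s) / besselJr 0 (a * ρ))
      (-a * besselJr 1 (a * s) / besselJr 0 (a * ρ)) s :=
    fun hs => (hasDerivAt_besselJr_zero_comp_mul (mul_ne_zero ha hs.ne')).div_const _
  rcases lt_trichotomy r ρ with hlt | rfl | hgt
  · rw [min_eq_left hlt.le]
    exact (hF hr).congr_of_eventuallyEq
      (eventually_of_mem (Ioo_mem_nhds hr hlt) fun s hs => hfin s hs.1 hs.2.le)
  · have hleft : HasDerivWithinAt f 0 (Set.Iic r) r := by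
      have := (hF hr).hasDerivWithinAt (s := Set.Iic r)
      rw [hJ1, mul_zero, zero_div] at this
      exact this.congr_of_eventuallyEq
        (eventually_of_mem (Ioc_mem_nhdsLE hr) fun s hs => hfin s hs.1 hs.2) (hfin r hr le_rfl)
    have hright : HasDerivWithinAt f 0 (Set.Ici r) r := by
      refine (hasDerivWithinAt_const r _ 1).congr_of_mem (fun s hs => ?_) Set.self_mem_Ici
      rcases (Set.mem_Ici.1 hs).eq_or_lt with heq | hlt
      · rw [← heq, hfin r hr le_rfl, div_self hJ0]
      · exact hfout s hlt
    rw [min_self, hJ1, mul_zero, zero_div]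
    simpa [Set.Iic_union_Ici, hasDerivWithinAt_univ] using hleft.union hright
  · rw [min_eq_right hgt.le, hJ1, mul_zero, zero_div]
    exact (hasDerivAt_const r 1).congr_of_eventuallyEq
      (eventually_of_mem (Ioi_mem_nhds hgt) fun s hs => hfout s hs)

theorem resonanceProfile_ode_of_lt (ha : a ≠ 0) (hJ1 : besselJr 1 (a * ρ) = 0)
    (hJ0 : besselJr 0 (a * ρ) ≠ 0)
    (hfin : ∀ r : ℝ, 0 < r → r ≤ ρ → f r = besselJr 0 (a * r) / besselJr 0 (a * ρ))
    (hfout : ∀ r : ℝ, ρ < r → f r = 1) {r : ℝ} (hr : 0 < r) (hrρ : r < ρ) :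
    DifferentiableAt ℝ f r ∧ DifferentiableAt ℝ (deriv f) r ∧
      deriv (deriv f) r + deriv f r / r + a ^ 2 * f r = 0 := by
  have hderiv : deriv f =ᶠ[𝓝 r] fun s => -a * besselJr 1 (a * s) / besselJr 0 (a * ρ) :=
    eventually_of_mem (Ioo_mem_nhds hr hrρ) fun s hs => by
      rw [(hasDerivAt_resonanceProfile ha hJ1 hJ0 hfin hfout hs.1).deriv, min_eq_left hs.2.le]
  have hderiv2 := (((hasDerivAt_besselJr_one_comp_mul (mul_ne_zero ha hr.ne')).const_mul
    (-a)).div_const (besselJr 0 (a * ρ))).congr_of_eventuallyEq hderiv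
  refine ⟨(hasDerivAt_resonanceProfile ha hJ1 hJ0 hfin hfout hr).differentiableAt,
    hderiv2.differentiableAt, ?_⟩
  rw [hderiv2.deriv, hderiv.eq_of_nhds, hfin r hr hrρ.le]
  ring

theorem resonanceProfile_ode_of_gt (hfout : ∀ r : ℝ, ρ < r → f r = 1) {r : ℝ} (hρr : ρ < r) :
    DifferentiableAt ℝ f r ∧ DifferentiableAt ℝ (deriv f) r ∧
      deriv (deriv f) r + deriv f r / r = 0 := by
  have hf : f =ᶠ[𝓝 r] fun _ => 1 := eventually_of_mem (Ioi_mem_nhds hρr) hfout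
  have hderiv : deriv f =ᶠ[𝓝 r] fun _ => 0 := hf.deriv.trans (by rw [deriv_const'])
  refine ⟨(differentiableAt_const 1).congr_of_eventuallyEq hf,
    (differentiableAt_const 0).congr_of_eventuallyEq hderiv, ?_⟩
  rw [hderiv.deriv_eq, hderiv.eq_of_nhds, deriv_const, zero_div, add_zero]

theorem exists_abs_resonanceProfile_le
    (hfin : ∀ r : ℝ, 0 < r → r ≤ ρ → f r = besselJr 0 (a * r) / besselJr 0 (a * ρ))
    (hfout : ∀ r : ℝ, ρ < r → f r = 1) : ∃ M : ℝ, ∀ r : ℝ, 0 < r → |f r| ≤ M := by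
  have hJ0cont := continuous_besselJr 0
  obtain ⟨C, hC⟩ := isCompact_Icc.exists_bound_of_continuousOn (s := Set.Icc 0 ρ)
    (f := fun r => besselJr 0 (a * r) / besselJr 0 (a * ρ)) (by fun_prop)
  refine ⟨max C 1, fun r hr => ?_⟩
  rcases le_or_gt r ρ with hrρ | hρr
  · rw [hfin r hr hrρ]
    exact (hC r ⟨hr.le, hrρ⟩).trans (le_max_left _ _)
  · rw [hfout r hρr, abs_one]
    exact le_max_right _ _

end ResonanceProfile

theorem stmt_2_general (a ρ : ℝ) (ha : 0 < a)
    (hJ1 : besselJr 1 (a*ρ) = 0) (hJ0 : besselJr 0 (a*ρ) ≠ 0)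
    (f : ℝ → ℝ)
    (hfin : ∀ r : ℝ, 0 < r → r ≤ ρ → f r = besselJr 0 (a*r) / besselJr 0 (a*ρ))
    (hfout : ∀ r : ℝ, ρ < r → f r = 1) :
    ContDiffOn ℝ 1 f (Set.Ioi 0) ∧
    (∀ r : ℝ, ((0 < r ∧ r < ρ) ∨ ρ < r) →
      DifferentiableAt ℝ f r ∧ DifferentiableAt ℝ (deriv f) r ∧
      deriv (deriv f) r + deriv f r / r
        + (if r < ρ then a^2 else 0) * f r = 0) ∧
    (∃ M : ℝ, ∀ r : ℝ, 0 < r → |f r| ≤ M) ∧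
    Filter.Tendsto f Filter.atTop (nhds 1) := by
  have hJ1cont := continuous_besselJr 1
  refine ⟨contDiffOn_one_of_hasDerivAt isOpen_Ioi
      (fun r hr => hasDerivAt_resonanceProfile ha.ne' hJ1 hJ0 hfin hfout hr) (by fun_prop),
    ?_, exists_abs_resonanceProfile_le hfin hfout,
    tendsto_const_nhds.congr' (eventually_of_mem (Ioi_mem_atTop ρ) fun r hr => (hfout r hr).symm)⟩
  rintro r (⟨hr, hrρ⟩ | hρr)
  · simpa [hrρ] using resonanceProfile_ode_of_lt ha.ne' hJ1 hJ0 hfin hfout hr hrρ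
  · simpa [hρr.not_gt] using resonanceProfile_ode_of_gt hfout hρr

/-- s-resonant state at zero energy for the circular well. -/
theorem stmt_2 (a ρ : ℝ) (ha : 0 < a) (hρ : 0 < ρ)
    (hJ1 : besselJr 1 (a*ρ) = 0) (hJ0 : besselJr 0 (a*ρ) ≠ 0)
    (f : ℝ → ℝ)
    (hfin : ∀ r : ℝ, 0 < r → r ≤ ρ → f r = besselJr 0 (a*r) / besselJr 0 (a*ρ))
    (hfout : ∀ r : ℝ, ρ < r → f r = 1) :
    ContDiffOn ℝ 1 f (Set.Ioi 0) ∧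
    (∀ r : ℝ, ((0 < r ∧ r < ρ) ∨ ρ < r) →
      DifferentiableAt ℝ f r ∧ DifferentiableAt ℝ (deriv f) r ∧
      deriv (deriv f) r + deriv f r / r
        + (if r < ρ then a^2 else 0) * f r = 0) ∧
    (∃ M : ℝ, ∀ r : ℝ, 0 < r → |f r| ≤ M) ∧
    Filter.Tendsto f Filter.atTop (nhds 1) :=
  stmt_2_general a ρ ha hJ1 hJ0 f hfin hfout
end

section
/- Let ℓ ≥ 1 be an integer, a, ρ > 0 and λ > 0, and set μ = √(λ² + a²). Assume J_ℓ′(μρ) ≠ 0, set A_ℓ = −(λ/μ)·J_ℓ(μρ)/J_ℓ′(μρ), and assume (J_ℓ(λρ) + A_ℓJ_ℓ′(λρ))² + (Y_ℓ(λρ) + A_ℓY_ℓ′(λρ))² ≠ 0. Then −(a²/μ²)·(2/(π²λ))·(1 − (ℓ²/(λρ)²)·A_ℓ²) / ( (J_ℓ(λρ) + A_ℓJ_ℓ′(λρ))² + (Y_ℓ(λρ) + A_ℓY_ℓ′(λρ))² ) = (2a²/(π²λ))·J_{ℓ−1}(μρ)·J_{ℓ+1}(μρ) / D_ℓ(λ),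 where D_ℓ(λ) = (μJ_{ℓ−1}(μρ)J_ℓ(λρ) − λJ_ℓ(μρ)J_{ℓ−1}(λρ))² + (μJ_{ℓ−1}(μρ)Y_ℓ(λρ) − λJ_ℓ(μρ)Y_{ℓ−1}(λρ))². -/
open scoped Real Topology
open Filter Asymptotics

/-!
The phase-shift formula on the left is turned into the one on the right by the recurrences
`J_ℓ' = J_{ℓ-1} - (ℓ/x) J_ℓ = (ℓ/x) J_ℓ - J_{ℓ+1}` and `Y_ℓ' = Y_{ℓ-1} - (ℓ/x) Y_ℓ`, obtained by
differentiating the defining series term by term. Writing `b = J_ℓ'(μρ)`, the first one gives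
`μ J_{ℓ-1}(μρ) f - λ J_ℓ(μρ) f_{ℓ-1} = μ b (f + A f')` for `f = J_ℓ, Y_ℓ` at `λρ`, so that
`D_ℓ(λ) = (μb)²` times the denominator on the left, and both together give
`J_{ℓ-1}(μρ) J_{ℓ+1}(μρ) = (ℓ J_ℓ(μρ)/(μρ))² - b² = -b² (1 - ℓ² A²/(λρ)²)`.
-/

open scoped Nat

noncomputable def halfPowSeries (c : ℕ → ℝ) (ℓ : ℕ) (x : ℝ) : ℝ :=
  ∑' k, c k * (x / 2) ^ (2 * k + ℓ)

def IsEntireCoeff (c : ℕ → ℝ) : Prop := ∀ r : ℝ, Summable fun k => c k * r ^ k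

lemma isEntireCoeff_const_div_factorial (C : ℝ) : IsEntireCoeff fun k => C / k ! := fun r => by
  simpa only [div_mul_eq_mul_div, mul_div_assoc] using
    (Real.summable_pow_div_factorial r).mul_left C

namespace IsEntireCoeff

variable {c d : ℕ → ℝ}

lemma of_abs_le (hc : IsEntireCoeff c) (h : ∀ k, |d k| ≤ |c k|) : IsEntireCoeff d := fun r =>
  (hc |r|).abs.of_norm_bounded fun k => by
    simp only [Real.norm_eq_abs, abs_mul, abs_pow, abs_abs]
    exact mul_le_mul_of_nonneg_right (h k) (by positivity)

lemma add (hc : IsEntireCoeff c) (hd : IsEntireCoeff d) : IsEntireCoeff fun k => c k + d k :=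
  fun r => by simpa only [add_mul] using (hc r).add (hd r)

lemma natCast_mul (hc : IsEntireCoeff c) : IsEntireCoeff fun k => (k : ℝ) * c k := fun r =>
  (hc (2 * |r|)).abs.of_norm_bounded fun k => by
    have hk : (k : ℝ) ≤ 2 ^ k := by exact_mod_cast Nat.lt_two_pow_self.le
    simp only [Real.norm_eq_abs, abs_mul, abs_pow, abs_abs, Nat.abs_cast, mul_pow, abs_two]
    calc (k : ℝ) * |c k| * |r| ^ k ≤ 2 ^ k * |c k| * |r| ^ k := by gcongr
      _ = |c k| * (2 ^ k * |r| ^ k) := by ring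

lemma summable_halfPow (hc : IsEntireCoeff c) (ℓ : ℕ) (x : ℝ) :
    Summable fun k => c k * (x / 2) ^ (2 * k + ℓ) := by
  simpa only [pow_add, pow_mul, mul_assoc] using (hc ((x / 2) ^ 2)).mul_right ((x / 2) ^ ℓ)

end IsEntireCoeff

section HalfPowSeries

variable {c d e : ℕ → ℝ} {x : ℝ}

lemma halfPowSeries_succ (c : ℕ → ℝ) (ℓ : ℕ) (x : ℝ) :
    halfPowSeries c (ℓ + 1) x = x / 2 * halfPowSeries c ℓ x := by
  rw [halfPowSeries, halfPowSeries, ← tsum_mul_left]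
  congr 1 with k
  rw [← add_assoc, pow_succ]
  ring

lemma halfPowSeries_mul_add_mul (hc : IsEntireCoeff c) (hd : IsEntireCoeff d) (a b : ℝ) (ℓ : ℕ)
    (x : ℝ) : halfPowSeries (fun k => a * c k + b * d k) ℓ x
      = a * halfPowSeries c ℓ x + b * halfPowSeries d ℓ x := by
  rw [halfPowSeries, halfPowSeries, halfPowSeries, ← tsum_mul_left, ← tsum_mul_left,
    ← ((hc.summable_halfPow ℓ x).mul_left a).tsum_add ((hd.summable_halfPow ℓ x).mul_left b)]
  congr 1 with k
  ring

lemma halfPowSeries_eq_add_shift (hc : IsEntireCoeff c) (ℓ : ℕ) (x : ℝ) :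
    halfPowSeries c ℓ x = c 0 * (x / 2) ^ ℓ + halfPowSeries (fun k => c (k + 1)) (ℓ + 2) x := by
  rw [halfPowSeries, (hc.summable_halfPow ℓ x).tsum_eq_zero_add, halfPowSeries]
  simp only [mul_zero, zero_add, mul_add, mul_one, add_right_comm _ 2 ℓ, add_assoc]

lemma natCast_mul_half_pow_pred_mul_half (m : ℕ) (hx : x ≠ 0) :
    (m : ℝ) * (x / 2) ^ (m - 1) * (1 / 2) = m * (x / 2) ^ m / x := by
  rcases m with _ | m
  · simp
  · rw [Nat.add_sub_cancel, pow_succ]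
    field_simp

lemma norm_mul_natCast_mul_half_pow_pred_le (a : ℝ) (m : ℕ) {y R : ℝ} (hy : |y| ≤ 2 * R)
    (hR : 1 ≤ R) : ‖a * (m * (y / 2) ^ (m - 1) * (1 / 2))‖ ≤ |a| * (2 * R) ^ m := by
  have hm : (m : ℝ) ≤ 2 ^ m := mod_cast Nat.lt_two_pow_self.le
  have hpow : |y / 2| ^ (m - 1) ≤ R ^ m :=
    (pow_le_pow_left₀ (abs_nonneg _) (by rw [abs_div, abs_two]; linarith) _).trans
      (pow_le_pow_right₀ hR (Nat.sub_le m 1))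
  calc ‖a * (m * (y / 2) ^ (m - 1) * (1 / 2))‖ = |a| * (m * |y / 2| ^ (m - 1)) / 2 := by
        simp only [Real.norm_eq_abs, abs_mul, abs_pow, Nat.abs_cast, abs_div, abs_one, abs_two]
        ring
    _ ≤ |a| * (2 ^ m * R ^ m) / 2 := by gcongr
    _ ≤ |a| * (2 * R) ^ m := by
        rw [mul_pow]
        linarith [show 0 ≤ |a| * (2 ^ m * R ^ m) by positivity]

lemma hasDerivAt_halfPowSeries (hc : IsEntireCoeff c) (ℓ : ℕ) (hx : x ≠ 0) :
    HasDerivAt (halfPowSeries c ℓ)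
      (halfPowSeries (fun k => (2 * k + ℓ : ℝ) * c k) ℓ x / x) x := by
  set R := |x| + 1
  have hR : 1 ≤ R := le_add_of_nonneg_left (abs_nonneg x)
  have hxR : x ∈ Metric.ball (0 : ℝ) R := by simp [R]
  have htermwise : HasDerivAt (halfPowSeries c ℓ)
      (∑' k, c k * ((2 * k + ℓ : ℕ) * (x / 2) ^ (2 * k + ℓ - 1) * (1 / 2))) x := by
    refine hasDerivAt_tsum_of_isPreconnected
      (u := fun k => |c k * ((2 * R) ^ 2) ^ k| * (2 * R) ^ ℓ)
      ((hc _).abs.mul_right _) Metric.isOpen_ball (convex_ball 0 R).isPreconnected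
      (fun k y _ => (((hasDerivAt_id y).div_const 2).pow _).const_mul (c k)) (fun k y hy => ?_)
      hxR (hc.summable_halfPow ℓ x) hxR
    rw [Metric.mem_ball, dist_zero_right, Real.norm_eq_abs] at hy
    refine (norm_mul_natCast_mul_half_pow_pred_le _ _ (by linarith) hR).trans_eq ?_
    rw [abs_mul, abs_of_nonneg (by positivity : (0 : ℝ) ≤ ((2 * R) ^ 2) ^ k), pow_add, pow_mul,
      mul_assoc]
  convert htermwise using 1
  rw [halfPowSeries, ← tsum_div_const]
  congr 1 with k
  rw [natCast_mul_half_pow_pred_mul_half _ hx]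
  push_cast
  ring

lemma hasDerivAt_halfPowSeries_succ_of_mul_eq (hd : IsEntireCoeff d) (he : IsEntireCoeff e)
    (n : ℕ) (h : ∀ k : ℕ, (k + n + 1 : ℝ) * d k = e k) (hx : x ≠ 0) :
    HasDerivAt (halfPowSeries d (n + 1))
      (halfPowSeries e n x - (n + 1) / x * halfPowSeries d (n + 1) x) x := by
  have hcoeff : (fun k : ℕ => (2 * k + ↑(n + 1) : ℝ) * d k)
      = fun k => 2 * e k + -(n + 1) * d k := by
    funext k
    rw [← h]
    push_cast
    ring
  refine (hasDerivAt_halfPowSeries hd (n + 1) hx).congr_deriv ?_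
  rw [hcoeff, halfPowSeries_mul_add_mul he hd, halfPowSeries_succ e]
  field_simp
  ring

lemma hasDerivAt_halfPowSeries_succ_of_succ_mul_eq (hd : IsEntireCoeff d) (n : ℕ)
    (h : ∀ k : ℕ, (k + 1 : ℝ) * d (k + 1) = -e k) (hx : x ≠ 0) :
    HasDerivAt (halfPowSeries d (n + 1))
      ((n + 1) / x * halfPowSeries d (n + 1) x - halfPowSeries e (n + 2) x) x := by
  have hcoeff : (fun k : ℕ => (2 * k + ↑(n + 1) : ℝ) * d k)
      = fun k => (n + 1) * d k + 2 * (k * d k) := by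
    funext k
    push_cast
    ring
  have hshift : halfPowSeries (fun k => (k : ℝ) * d k) (n + 1) x
      = -(x / 2 * halfPowSeries e (n + 2) x) := by
    rw [halfPowSeries_eq_add_shift hd.natCast_mul, show n + 1 + 2 = n + 2 + 1 by omega,
      ← halfPowSeries_succ]
    simp only [Nat.cast_zero, zero_mul, zero_add, Nat.cast_succ, h]
    simp only [halfPowSeries, neg_mul, tsum_neg]
  refine (hasDerivAt_halfPowSeries hd (n + 1) hx).congr_deriv ?_
  rw [hcoeff, halfPowSeries_mul_add_mul hd hd.natCast_mul, hshift]
  field_simp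
  ring

end HalfPowSeries

noncomputable def besselJCoeff (ℓ k : ℕ) : ℝ := (-1 : ℝ) ^ k / ((k ! : ℝ) * ((k + ℓ)! : ℝ))

lemma besselJr_eq_halfPowSeries (ℓ : ℕ) : besselJr ℓ = halfPowSeries (besselJCoeff ℓ) ℓ := rfl

lemma isEntireCoeff_besselJCoeff (ℓ : ℕ) : IsEntireCoeff (besselJCoeff ℓ) :=
  (isEntireCoeff_const_div_factorial 1).of_abs_le fun k => by
    rw [besselJCoeff, abs_div, abs_pow, abs_neg, abs_one, one_pow, abs_of_pos (by positivity),
      abs_of_pos (by positivity)]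
    gcongr
    exact le_mul_of_one_le_right (by positivity) (Nat.one_le_cast.mpr (Nat.factorial_pos _))

lemma succ_mul_besselJCoeff_succ (n k : ℕ) :
    (k + n + 1 : ℝ) * besselJCoeff (n + 1) k = besselJCoeff n k := by
  rw [besselJCoeff, besselJCoeff, ← add_assoc, Nat.factorial_succ]
  push_cast
  field_simp

lemma succ_mul_besselJCoeff_succ_succ (n k : ℕ) :
    (k + 1 : ℝ) * besselJCoeff (n + 1) (k + 1) = -besselJCoeff (n + 2) k := by
  rw [besselJCoeff, besselJCoeff, Nat.factorial_succ k, show k + 1 + (n + 1) = k + (n + 2) by ring]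
  push_cast
  field_simp
  ring

lemma harm_succ (m : ℕ) : harm (m + 1) = harm m + 1 / (m + 1) := by
  rw [harm, harm, Finset.sum_range_succ]

lemma harm_nonneg (m : ℕ) : 0 ≤ harm m := Finset.sum_nonneg fun j _ => by positivity

lemma harm_le (m : ℕ) : harm m ≤ m := by
  calc harm m ≤ ∑ _j ∈ Finset.range m, (1 : ℝ) :=
        Finset.sum_le_sum fun j _ => div_le_one_of_le₀ (by linarith [j.cast_nonneg (α := ℝ)])
          (by positivity)
    _ = m := by simp

noncomputable def besselYCoeff (ℓ k : ℕ) : ℝ :=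
  (-1 : ℝ) ^ k * (harm k + harm (k + ℓ)) / ((k ! : ℝ) * ((k + ℓ)! : ℝ))

noncomputable def besselYPrincipalPart (ℓ : ℕ) (x : ℝ) : ℝ :=
  ∑ k ∈ Finset.range ℓ, (((ℓ - k - 1)! : ℝ) / (k ! : ℝ)) * (x / 2) ^ (2 * (k : ℤ) - (ℓ : ℤ))

lemma besselYr_eq (ℓ : ℕ) : besselYr ℓ = fun x => 2 / π * (Real.log (x / 2) + eulerGamma)
    * besselJr ℓ x - 1 / π * besselYPrincipalPart ℓ x
    - 1 / π * halfPowSeries (besselYCoeff ℓ) ℓ x := rfl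

lemma isEntireCoeff_besselYCoeff (ℓ : ℕ) : IsEntireCoeff (besselYCoeff ℓ) :=
  (isEntireCoeff_const_div_factorial 2).of_abs_le fun k => by
    have hharm : harm k + harm (k + ℓ) ≤ 2 * ((k + ℓ)! : ℝ) := by
      have := harm_le k
      have := harm_le (k + ℓ)
      have : ((k + ℓ : ℕ) : ℝ) ≤ (k + ℓ)! := mod_cast Nat.self_le_factorial _
      push_cast at *
      linarith
    rw [besselYCoeff, abs_div, abs_mul, abs_pow, abs_neg, abs_one, one_pow, one_mul,
      abs_of_nonneg (add_nonneg (harm_nonneg _) (harm_nonneg _)), abs_of_pos (by positivity),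
      abs_of_pos (by positivity), div_le_div_iff₀ (by positivity) (by positivity)]
    nlinarith [(Nat.cast_nonneg (k !) : (0 : ℝ) ≤ k !)]

lemma succ_mul_besselYCoeff_succ (n k : ℕ) :
    (k + n + 1 : ℝ) * besselYCoeff (n + 1) k = besselYCoeff n k + besselJCoeff (n + 1) k := by
  rw [besselYCoeff, besselYCoeff, besselJCoeff, ← add_assoc, harm_succ, Nat.factorial_succ]
  push_cast
  field_simp
  ring

section Recurrences

variable {x : ℝ}

lemma hasDerivAt_besselJr_succ_lowering (n : ℕ) (hx : x ≠ 0) :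
    HasDerivAt (besselJr (n + 1)) (besselJr n x - (n + 1) / x * besselJr (n + 1) x) x :=
  hasDerivAt_halfPowSeries_succ_of_mul_eq (isEntireCoeff_besselJCoeff _)
    (isEntireCoeff_besselJCoeff _) n (succ_mul_besselJCoeff_succ n) hx

lemma hasDerivAt_besselJr_succ_raising (n : ℕ) (hx : x ≠ 0) :
    HasDerivAt (besselJr (n + 1)) ((n + 1) / x * besselJr (n + 1) x - besselJr (n + 2) x) x :=
  hasDerivAt_halfPowSeries_succ_of_succ_mul_eq (isEntireCoeff_besselJCoeff _) n
    (succ_mul_besselJCoeff_succ_succ n) hx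

lemma besselJr_mul_besselJr_add_two (n : ℕ) (hx : x ≠ 0) :
    besselJr n x * besselJr (n + 2) x
      = ((n + 1) / x * besselJr (n + 1) x) ^ 2 - deriv (besselJr (n + 1)) x ^ 2 := by
  have hlower := (hasDerivAt_besselJr_succ_lowering n hx).deriv
  have hraise := (hasDerivAt_besselJr_succ_raising n hx).deriv
  linear_combination (deriv (besselJr (n + 1)) x + (n + 1) / x * besselJr (n + 1) x) * hraise
    - besselJr (n + 2) x * hlower

lemma hasDerivAt_besselYPrincipalPart_succ (n : ℕ) (hx : x ≠ 0) :
    HasDerivAt (besselYPrincipalPart (n + 1))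
      (besselYPrincipalPart n x - (n + 1) / x * besselYPrincipalPart (n + 1) x) x := by
  have hx2 : x / 2 ≠ 0 := div_ne_zero hx two_ne_zero
  refine (HasDerivAt.fun_sum fun k _ => (((hasDerivAt_zpow _ (x / 2) (Or.inl hx2)).comp x
    ((hasDerivAt_id x).div_const 2)).const_mul _)).congr_deriv ?_
  have hterm (a : ℝ) (m : ℤ) :
      a * (m * (x / 2) ^ (m - 1) * (1 / 2)) + (n + 1) / x * (a * (x / 2) ^ m)
      = a * ((m + n + 1) / 2) * (x / 2) ^ (m - 1) := by
    rw [zpow_sub_one₀ hx2]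
    field_simp
    ring
  rw [eq_sub_iff_add_eq, besselYPrincipalPart, Finset.mul_sum, ← Finset.sum_add_distrib,
    Finset.sum_congr rfl fun k _ => hterm _ _, Finset.sum_range_succ', besselYPrincipalPart]
  push_cast
  rw [show ((0 : ℝ) - (n + 1) + n + 1) / 2 = 0 by ring, mul_zero, zero_mul, add_zero]
  refine Finset.sum_congr rfl fun k _ => ?_
  rw [show 2 * ((k : ℤ) + 1) - (n + 1) - 1 = 2 * k - n by ring, Nat.factorial_succ]
  push_cast
  field_simp
  ring

lemma hasDerivAt_besselYr_succ_lowering (n : ℕ) (hx : x ≠ 0) :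
    HasDerivAt (besselYr (n + 1)) (besselYr n x - (n + 1) / x * besselYr (n + 1) x) x := by
  have hlog : HasDerivAt (fun y => Real.log (y / 2) + eulerGamma) x⁻¹ x := by
    have h := ((Real.hasDerivAt_log (div_ne_zero hx two_ne_zero)).comp x
      ((hasDerivAt_id x).div_const 2)).add_const eulerGamma
    rwa [show (x / 2)⁻¹ * (1 / 2) = x⁻¹ by ring] at h
  have hS := hasDerivAt_halfPowSeries_succ_of_mul_eq (isEntireCoeff_besselYCoeff (n + 1))
    ((isEntireCoeff_besselYCoeff n).add (isEntireCoeff_besselJCoeff (n + 1))) n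
    (succ_mul_besselYCoeff_succ n) hx
  have hSsplit := halfPowSeries_mul_add_mul (isEntireCoeff_besselYCoeff n)
    (isEntireCoeff_besselJCoeff (n + 1)) 1 1 n x
  simp only [one_mul] at hSsplit
  have hJhalf := halfPowSeries_succ (besselJCoeff (n + 1)) n x
  rw [← besselJr_eq_halfPowSeries] at hJhalf
  rw [besselYr_eq]
  refine ((((hlog.mul (hasDerivAt_besselJr_succ_lowering n hx)).const_mul (2 / π)).sub
    ((hasDerivAt_besselYPrincipalPart_succ n hx).const_mul (1 / π))).sub
    (hS.const_mul (1 / π))).congr_deriv ?_ |>.congr_of_eventuallyEq ?_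
  · simp only [besselYr_eq, hSsplit]
    rw [hJhalf]
    field_simp
    ring
  · exact .of_eq (funext fun y => by simp only [Pi.sub_apply, Pi.mul_apply]; ring)

end Recurrences

theorem stmt_10_general (ℓ : ℕ) (hℓ : 1 ≤ ℓ) (a ρ lam : ℝ) (hρ : 0 < ρ)
    (hlam : 0 < lam)
    (μ : ℝ) (hμ : μ = Real.sqrt (lam^2 + a^2))
    (hJ' : deriv (besselJr ℓ) (μ*ρ) ≠ 0)
    (A : ℝ) (hA : A = -(lam/μ) * besselJr ℓ (μ*ρ) / deriv (besselJr ℓ) (μ*ρ)) :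
    -(a^2/μ^2) * (2/(Real.pi^2*lam)) * (1 - ((ℓ:ℝ)^2/(lam*ρ)^2) * A^2)
        / ((besselJr ℓ (lam*ρ) + A * deriv (besselJr ℓ) (lam*ρ))^2
          + (besselYr ℓ (lam*ρ) + A * deriv (besselYr ℓ) (lam*ρ))^2)
      = (2*a^2/(Real.pi^2*lam)) * besselJr (ℓ-1) (μ*ρ) * besselJr (ℓ+1) (μ*ρ)
          / Dfun a ρ ℓ lam := by
  obtain ⟨n, rfl⟩ : ∃ n, ℓ = n + 1 := ⟨ℓ - 1, by omega⟩
  have hμ0 : 0 < μ := hμ ▸ by positivity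
  have hx : μ * ρ ≠ 0 := by positivity
  have hy : lam * ρ ≠ 0 := by positivity
  have hJlower : besselJr n (μ * ρ)
      = deriv (besselJr (n + 1)) (μ * ρ) + (n + 1) / (μ * ρ) * besselJr (n + 1) (μ * ρ) := by
    rw [(hasDerivAt_besselJr_succ_lowering n hx).deriv]
    ring
  have hprod : besselJr n (μ * ρ) * besselJr (n + 2) (μ * ρ)
      = -deriv (besselJr (n + 1)) (μ * ρ) ^ 2
        * (1 - ((n + 1 : ℕ) : ℝ) ^ 2 / (lam * ρ) ^ 2 * A ^ 2) := by
    rw [besselJr_mul_besselJr_add_two n hx, hA]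
    field_simp
    push_cast
    ring
  set b := deriv (besselJr (n + 1)) (μ * ρ)
  have hcross (f fpred : ℝ) : μ * besselJr n (μ * ρ) * f - lam * besselJr (n + 1) (μ * ρ) * fpred
      = μ * b * (f + A * (fpred - (n + 1) / (lam * ρ) * f)) := by
    rw [hJlower, hA]
    field_simp
    ring
  rw [(hasDerivAt_besselJr_succ_lowering n hy).deriv,
    (hasDerivAt_besselYr_succ_lowering n hy).deriv, Dfun, ← hμ, Nat.add_sub_cancel, hcross, hcross,
    mul_assoc _ (besselJr n _), hprod, mul_pow _ (besselJr _ _ + _), mul_pow _ (besselYr _ _ + _),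
    ← mul_add, ← div_div _ ((μ * b) ^ 2)]
  congr 1
  field_simp

/-- alternate expression for `σ'_ℓ(λ)`, `ℓ ≥ 1`. -/
theorem stmt_10 (ℓ : ℕ) (hℓ : 1 ≤ ℓ) (a ρ lam : ℝ) (ha : 0 < a) (hρ : 0 < ρ)
    (hlam : 0 < lam)
    (μ : ℝ) (hμ : μ = Real.sqrt (lam^2 + a^2))
    (hJ' : deriv (besselJr ℓ) (μ*ρ) ≠ 0)
    (A : ℝ) (hA : A = -(lam/μ) * besselJr ℓ (μ*ρ) / deriv (besselJr ℓ) (μ*ρ))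
    (hden : (besselJr ℓ (lam*ρ) + A * deriv (besselJr ℓ) (lam*ρ))^2
        + (besselYr ℓ (lam*ρ) + A * deriv (besselYr ℓ) (lam*ρ))^2 ≠ 0) :
    -(a^2/μ^2) * (2/(Real.pi^2*lam)) * (1 - ((ℓ:ℝ)^2/(lam*ρ)^2) * A^2)
        / ((besselJr ℓ (lam*ρ) + A * deriv (besselJr ℓ) (lam*ρ))^2
          + (besselYr ℓ (lam*ρ) + A * deriv (besselYr ℓ) (lam*ρ))^2)
      = (2*a^2/(Real.pi^2*lam)) * besselJr (ℓ-1) (μ*ρ) * besselJr (ℓ+1) (μ*ρ)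
          / Dfun a ρ ℓ lam :=
  stmt_10_general ℓ hℓ a ρ lam hρ hlam μ hμ hJ' A hA
end
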